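/- arXiv:1602.00733 — 2 statements merged into one kernel-verified Lean document; each statement's English description precedes it below -/
import Mathlib

section
/- The family {K_{2,p} : p ∈ ℕ, p ≥ 2} of complete bipartite graphs is an infinite antichain of the contraction relation: for all distinct integers p, q ≥ 2, K_{2,p} is not a contraction of K_{2,q}. -/
open SimpleGraph

/-- A contraction model of a graph `H` in a graph `G`: a map sending each vertex of `H`
to a connected subset of vertices of `G`, these subsets partitioning the vertices of `G`,
with distinct vertices of `H` adjacent iff the corresponding subsets are joined by an
edge of `G`. -/
def IsContractionModel {V W : Type*} (G : SimpleGraph V) (H : SimpleGraph W)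
    (φ : W → Set V) : Prop :=
  (∀ w : W, (G.induce (φ w)).Connected) ∧
  (∀ v : V, ∃! w : W, v ∈ φ w) ∧
  ∀ w w' : W, w ≠ w' →
    (H.Adj w w' ↔ ∃ a ∈ φ w, ∃ b ∈ φ w', G.Adj a b)

/-- `H` is a contraction of `G`: there is a contraction model of `H` in `G`
(equivalently, `H` can be obtained from `G` by a sequence of edge contractions). -/
def IsContraction {V W : Type*} (H : SimpleGraph W) (G : SimpleGraph V) : Prop :=
  ∃ φ : W → Set V, IsContractionModel G H φ

/-- The graph `D_r`: two adjacent vertices together with `r` further vertices,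
each adjacent to exactly the first two. `D_2` is the diamond (`K₄` minus an edge). -/
def Dgraph (r : ℕ) : SimpleGraph (Fin 2 ⊕ Fin r) :=
  SimpleGraph.fromRel (fun x _ => x.isLeft)

/-- Finite graphs, with vertex set `Fin n` for some `n`. -/
def FinGraph : Type := Σ n : ℕ, SimpleGraph (Fin n)

/-- The contraction relation on finite graphs. -/
def FinGraph.Contr (H G : FinGraph) : Prop := IsContraction H.2 G.2

/-- A set of finite graphs is well-quasi-ordered by the contraction relation if every
infinite sequence of its members contains two graphs, the earlier being a contraction
of the later. -/
def WqoByContraction (S : Set FinGraph) : Prop :=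
  ∀ f : ℕ → FinGraph, (∀ k, f k ∈ S) → ∃ i j : ℕ, i < j ∧ FinGraph.Contr (f i) (f j)

/-!
A contraction model of `H` in `G` induces a surjection `V(G) → V(H)` (send a vertex to its
part), so `|H| ≤ |G|`, and if `|H| < |G|` some part has two vertices and, being connected,
contains an edge. In `K_{2,q}` the endpoints of any edge together dominate the whole graph, so
the vertex of `H` owning that part is adjacent to every other vertex of `H`. But `K_{2,p}` with
`p ≥ 2` has no such universal vertex.
-/

namespace IsContractionModel

variable {V W : Type*} {G : SimpleGraph V} {H : SimpleGraph W} {φ : W → Set V}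

lemma nonempty (h : IsContractionModel G H φ) (w : W) : (φ w).Nonempty :=
  Set.nonempty_coe_sort.mp (h.1 w).nonempty

lemma eq_of_mem (h : IsContractionModel G H φ) {v : V} {w w' : W} (hw : v ∈ φ w)
    (hw' : v ∈ φ w') : w = w' :=
  (h.2.1 v).unique hw hw'

lemma exists_surjective_mem (h : IsContractionModel G H φ) :
    ∃ f : V → W, Function.Surjective f ∧ ∀ v, v ∈ φ (f v) := by
  choose f hf using fun v => (h.2.1 v).exists
  refine ⟨f, fun w => ?_, hf⟩
  obtain ⟨v, hv⟩ := h.nonempty w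
  exact ⟨v, h.eq_of_mem (hf v) hv⟩

lemma card_le [Fintype V] [Fintype W] (h : IsContractionModel G H φ) :
    Fintype.card W ≤ Fintype.card V :=
  have ⟨_, hf, _⟩ := h.exists_surjective_mem
  Fintype.card_le_of_surjective _ hf

lemma exists_adj_mem_of_card_lt [Fintype V] [Fintype W] (h : IsContractionModel G H φ)
    (hlt : Fintype.card W < Fintype.card V) :
    ∃ w, ∃ a ∈ φ w, ∃ b ∈ φ w, G.Adj a b := by
  obtain ⟨f, -, hf⟩ := h.exists_surjective_mem
  obtain ⟨a, b, hab, hfab⟩ := Fintype.exists_ne_map_eq_of_card_lt f hlt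
  have : Nontrivial (φ (f a)) := ⟨⟨⟨a, hf a⟩, ⟨b, hfab ▸ hf b⟩, by simpa using hab⟩⟩
  obtain ⟨c, hc⟩ := (h.1 (f a)).preconnected.exists_adj_of_nontrivial ⟨a, hf a⟩
  exact ⟨f a, a, hf a, c, c.2, hc⟩

lemma adj_of_forall_exists_adj (h : IsContractionModel G H φ) {w w' : W}
    (hdom : ∀ v ∉ φ w, ∃ a ∈ φ w, G.Adj a v) (hww' : w ≠ w') : H.Adj w w' := by
  obtain ⟨v, hv⟩ := h.nonempty w'
  obtain ⟨a, ha, hav⟩ := hdom v fun hvw => hww' (h.eq_of_mem hvw hv)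
  exact (h.2.2 w w' hww').mpr ⟨a, ha, v, hv, hav⟩

end IsContractionModel

section CompleteBipartite

variable {α β : Type*}

lemma completeBipartiteGraph_adj_or_adj_of_adj {a b : α ⊕ β}
    (hab : (completeBipartiteGraph α β).Adj a b) (v : α ⊕ β) :
    (completeBipartiteGraph α β).Adj a v ∨ (completeBipartiteGraph α β).Adj b v := by
  rcases a with _ | _ <;> rcases b with _ | _ <;> rcases v with _ | _ <;> simp_all

lemma completeBipartiteGraph_exists_ne_not_adj [Nontrivial α] [Nontrivial β] (w : α ⊕ β) :
    ∃ w', w' ≠ w ∧ ¬ (completeBipartiteGraph α β).Adj w w' := by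
  rcases w with x | y
  · obtain ⟨x', hx'⟩ := exists_ne x
    exact ⟨.inl x', by simpa using hx', by simp⟩
  · obtain ⟨y', hy'⟩ := exists_ne y
    exact ⟨.inr y', by simpa using hy', by simp⟩

end CompleteBipartite

theorem completeBipartite_two_antichain_general (p q : ℕ) (hp : 2 ≤ p) (hpq : p ≠ q) :
    ¬ IsContraction (completeBipartiteGraph (Fin 2) (Fin p))
        (completeBipartiteGraph (Fin 2) (Fin q)) := by
  rintro ⟨φ, hφ⟩
  rcases hpq.lt_or_gt with hlt | hgt
  · obtain ⟨w, a, ha, b, hb, hab⟩ := hφ.exists_adj_mem_of_card_lt (by simpa using hlt)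
    have hdom : ∀ v ∉ φ w, ∃ c ∈ φ w, (completeBipartiteGraph (Fin 2) (Fin q)).Adj c v :=
      fun v _ => (completeBipartiteGraph_adj_or_adj_of_adj hab v).elim
        (⟨a, ha, ·⟩) (⟨b, hb, ·⟩)
    have : Nontrivial (Fin p) := Fin.nontrivial_iff_two_le.mpr hp
    obtain ⟨w', hw'w, hnadj⟩ := completeBipartiteGraph_exists_ne_not_adj (α := Fin 2) w
    exact hnadj (hφ.adj_of_forall_exists_adj hdom hw'w.symm)
  · have := hφ.card_le
    simp only [Fintype.card_sum, Fintype.card_fin] at this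
    omega

/-- The family `{K_{2,p} : p ≥ 2}` is an antichain of the contraction
relation: for all distinct integers `p, q ≥ 2`, `K_{2,p}` is not a contraction of `K_{2,q}`. -/
theorem completeBipartite_two_antichain (p q : ℕ) (hp : 2 ≤ p) (hq : 2 ≤ q) (hpq : p ≠ q) :
    ¬ IsContraction (completeBipartiteGraph (Fin 2) (Fin p))
        (completeBipartiteGraph (Fin 2) (Fin q)) :=
  completeBipartite_two_antichain_general p q hp hpq
end

section
/- For all integers p, p', q, q' ≥ 3, there is a contraction model of W_{p,q} in W_{p',q'} if and only if p = p' and q = q'. In particular, {W_{p,q} : p, q ≥ 3} is an infinite antichain of the contraction relation. -/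
open SimpleGraph

/-- The graph `W_{p,q}`: the disjoint union of `p` isolated vertices (`Sum.inr ∘ Sum.inl`)
and the complete bipartite graph `K_{2,q}` (`Sum.inr ∘ Sum.inr`), together with two
non-adjacent poles (`Sum.inl`) adjacent to all the other `p + q + 2` vertices. -/
def Wgraph (p q : ℕ) : SimpleGraph (Fin 2 ⊕ (Fin p ⊕ (Fin 2 ⊕ Fin q))) :=
  SimpleGraph.fromRel (fun x y =>
    (x.isLeft ∧ y.isRight) ∨
    (∃ (s : Fin 2) (t : Fin q),
      x = Sum.inr (Sum.inr (Sum.inl s)) ∧ y = Sum.inr (Sum.inr (Sum.inr t))))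

/-! Every vertex of `W_{p,q}` is a pole, an isolated vertex, a semipole or a spoke, and adjacency
depends only on these kinds. Given a contraction model of `W_{p,q}` in `W_{p',q'}`, map each
vertex of `W_{p',q'}` to the vertex of `W_{p,q}` whose branch set contains it. A vertex all of
whose neighbours lie in other branch sets is alone in its branch set and keeps its neighbourhood.
Applied to the isolated vertices and the spokes of `W_{p',q'}`, this shows in turn that the map
sends the poles to distinct poles, the isolated vertices to isolated vertices and the semipoles
onto the semipoles, hence that it preserves kinds. Since no edge joins two vertices of the same
kind, all branch sets are then singletons, and a kind-preserving bijection forces `p = p'` and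
`q = q'`. -/

theorem SimpleGraph.eq_singleton_of_connected_induce {V : Type*} {G : SimpleGraph V} {s : Set V}
    (hs : (G.induce s).Connected) {a : V} (ha : a ∈ s) (h : ∀ b ∈ s, ¬ G.Adj a b) :
    s = {a} := by
  refine Set.eq_singleton_iff_unique_mem.mpr ⟨ha, fun b hb => ?_⟩
  obtain ⟨walk⟩ := hs.preconnected ⟨a, ha⟩ ⟨b, hb⟩
  cases walk with
  | nil => rfl
  | cons hadj _ => exact absurd hadj (h _ (Subtype.mem _))

theorem IsContraction.refl {V : Type*} (G : SimpleGraph V) : IsContraction G G := by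
  refine ⟨fun v => {v}, fun v => ?_, fun v => ⟨v, rfl, fun w hw => hw.symm⟩,
    fun v w _ => by simp⟩
  have : Nonempty ({v} : Set V) := ⟨⟨v, rfl⟩⟩
  exact ⟨fun a b => Subsingleton.elim a b ▸ Reachable.refl a⟩

namespace IsContractionModel

variable {V W : Type*} {G : SimpleGraph V} {H : SimpleGraph W} {φ : W → Set V}
  (hφ : IsContractionModel G H φ)

/-- The vertex of `H` whose branch set contains `v`. -/
noncomputable def owner (v : V) : W := (hφ.2.1 v).exists.choose

theorem mem_iff_owner_eq {v : V} {w : W} : v ∈ φ w ↔ hφ.owner v = w :=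
  ⟨fun h => ((hφ.2.1 v).unique h (hφ.2.1 v).exists.choose_spec).symm,
   fun h => h ▸ (hφ.2.1 v).exists.choose_spec⟩

theorem owner_surjective : Function.Surjective hφ.owner := fun w =>
  let ⟨⟨v, hv⟩⟩ := (hφ.1 w).nonempty
  ⟨v, hφ.mem_iff_owner_eq.1 hv⟩

theorem adj_owner {a b : V} (hab : G.Adj a b) (hne : hφ.owner a ≠ hφ.owner b) :
    H.Adj (hφ.owner a) (hφ.owner b) :=
  (hφ.2.2 _ _ hne).2 ⟨a, hφ.mem_iff_owner_eq.2 rfl, b, hφ.mem_iff_owner_eq.2 rfl, hab⟩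

theorem adj_owner_or_adj_owner {v a b : V} (ha : G.Adj v a) (hb : G.Adj v b)
    (hab : hφ.owner a ≠ hφ.owner b) :
    H.Adj (hφ.owner v) (hφ.owner a) ∨ H.Adj (hφ.owner v) (hφ.owner b) := by
  by_cases hva : hφ.owner v = hφ.owner a
  · exact .inr (hφ.adj_owner hb (hva ▸ hab))
  · exact .inl (hφ.adj_owner ha hva)

theorem branch_owner_eq_singleton {a : V} (h : ∀ b, G.Adj a b → hφ.owner b ≠ hφ.owner a) :
    φ (hφ.owner a) = {a} :=
  eq_singleton_of_connected_induce (hφ.1 _) (hφ.mem_iff_owner_eq.2 rfl)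
    fun b hb hab => h b hab (hφ.mem_iff_owner_eq.1 hb)

theorem neighborSet_owner {a : V} (h : ∀ b, G.Adj a b → hφ.owner b ≠ hφ.owner a) :
    H.neighborSet (hφ.owner a) = hφ.owner '' G.neighborSet a := by
  ext w
  constructor
  · intro hw
    obtain ⟨a', ha', b, hb, hab⟩ := (hφ.2.2 _ _ hw.ne).1 hw
    rw [hφ.branch_owner_eq_singleton h, Set.mem_singleton_iff] at ha'
    exact ⟨b, ha' ▸ hab, hφ.mem_iff_owner_eq.1 hb⟩
  · rintro ⟨b, hab, rfl⟩
    exact hφ.adj_owner hab (h b hab).symm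

theorem owner_injective (h : ∀ a b, G.Adj a b → hφ.owner a ≠ hφ.owner b) :
    Function.Injective hφ.owner := fun a b hab => by
  have hb : b ∈ φ (hφ.owner a) := hφ.mem_iff_owner_eq.2 hab.symm
  rw [hφ.branch_owner_eq_singleton fun c hc => (h a c hc).symm] at hb
  exact hb.symm

end IsContractionModel

-- A `spoke` is a vertex of the part of size `q` of `K_{2,q}`.
inductive WKind
  | pole
  | isolated
  | semipole
  | spoke
  deriving DecidableEq

def WKind.pattern : SimpleGraph WKind :=
  SimpleGraph.fromRel fun a b => (a = .pole ∧ b ≠ .pole) ∨ (a = .semipole ∧ b = .spoke)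

namespace Wgraph

abbrev Vert (p q : ℕ) : Type := Fin 2 ⊕ (Fin p ⊕ (Fin 2 ⊕ Fin q))

variable {p q : ℕ}

abbrev pole (i : Fin 2) : Vert p q := .inl i
abbrev isolated (c : Fin p) : Vert p q := .inr (.inl c)
abbrev semipole (k : Fin 2) : Vert p q := .inr (.inr (.inl k))
abbrev spoke (t : Fin q) : Vert p q := .inr (.inr (.inr t))

def kind : Vert p q → WKind
  | .inl _ => .pole
  | .inr (.inl _) => .isolated
  | .inr (.inr (.inl _)) => .semipole
  | .inr (.inr (.inr _)) => .spoke

@[simp] theorem kind_pole (i : Fin 2) : kind (pole i : Vert p q) = .pole := rfl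
@[simp] theorem kind_isolated (c : Fin p) : kind (isolated c : Vert p q) = .isolated := rfl
@[simp] theorem kind_semipole (k : Fin 2) : kind (semipole k : Vert p q) = .semipole := rfl
@[simp] theorem kind_spoke (t : Fin q) : kind (spoke t : Vert p q) = .spoke := rfl

theorem adj_iff {x y : Vert p q} :
    (Wgraph p q).Adj x y ↔ WKind.pattern.Adj (kind x) (kind y) := by
  rcases x with _ | _ | _ | _ <;> rcases y with _ | _ | _ | _ <;>
    simp [Wgraph, WKind.pattern] <;> omega

theorem neighborSet_isolated (c : Fin p) :
    (Wgraph p q).neighborSet (isolated c) = {pole 0, pole 1} := by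
  ext v
  rcases v with _ | _ | _ | _ <;> simp [adj_iff, WKind.pattern]
  omega

theorem neighborSet_spoke (t : Fin q) :
    (Wgraph p q).neighborSet (spoke t) = {pole 0, pole 1, semipole 0, semipole 1} := by
  ext v
  rcases v with _ | _ | _ | _ <;> simp [adj_iff, WKind.pattern]
  all_goals omega

theorem kind_eq_of_neighborSet_eq_pair (hq : 1 ≤ q) {w x y : Vert p q}
    (h : (Wgraph p q).neighborSet w = {x, y}) :
    kind w = .isolated ∧ kind x = .pole ∧ kind y = .pole ∧ x ≠ y := by
  have hN : ∀ v, (Wgraph p q).Adj w v ↔ v = x ∨ v = y := fun v => by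
    rw [← mem_neighborSet, h]; rfl
  have length_le : ∀ l : List _, l.Nodup → (∀ v ∈ l, (Wgraph p q).Adj w v) →
      l.length ≤ 2 :=
    fun l hl hadj => (hl.subperm (l₂ := [x, y]) fun v hv => by
      simpa using (hN v).1 (hadj v hv)).length_le
  have hx := (hN x).2 (.inl rfl)
  have hy := (hN y).2 (.inr rfl)
  rcases w with i | c | k | t
  · simpa [adj_iff, WKind.pattern] using length_le [semipole 0, semipole 1, spoke ⟨0, hq⟩]
  · have pole_adj (i : Fin 2) : (Wgraph p q).Adj (isolated c) (pole i) := by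
      simp [adj_iff, WKind.pattern]
    refine ⟨rfl, ?_, ?_, fun hxy => ?_⟩
    · exact (by simpa [adj_iff, WKind.pattern] using hx : _ ∧ _).2
    · exact (by simpa [adj_iff, WKind.pattern] using hy : _ ∧ _).2
    · subst hxy
      have h0 := ((hN _).1 (pole_adj 0)).elim id id
      have h1 := ((hN _).1 (pole_adj 1)).elim id id
      exact absurd (h0.trans h1.symm) (by simp)
  · simpa [adj_iff, WKind.pattern] using length_le [pole 0, pole 1, spoke ⟨0, hq⟩]
  · simpa [adj_iff, WKind.pattern] using length_le [pole 0, pole 1, semipole 0]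

theorem exists_spoke_ne (hq : 3 ≤ q) (x y : Vert p q) :
    ∃ t : Fin q, spoke t ≠ x ∧ spoke t ≠ y := by
  by_contra! h
  have hsub :
      [spoke ⟨0, by omega⟩, spoke ⟨1, by omega⟩, spoke ⟨2, by omega⟩] ⊆ [x, y] := by
    intro v hv
    simp only [List.mem_cons, List.not_mem_nil, or_false] at hv
    rcases hv with rfl | rfl | rfl <;> simpa using or_iff_not_imp_left.2 (h _)
  simpa using (List.Nodup.subperm (by simp) hsub).length_le

theorem exists_neighborSet_ne (hp : 3 ≤ p) (hq : 3 ≤ q) (a b c d : Vert p q) :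
    ∃ w ∉ ({a, b, c, d} : Set _), (Wgraph p q).neighborSet w ≠ {a, b, c, d} := by
  by_contra! h
  have length_le : ∀ l : List _, l.Nodup → (∀ v ∈ l, v ∈ ({a, b, c, d} : Set _)) →
      l.length ≤ 4 :=
    fun l hl hS => (hl.subperm (l₂ := [a, b, c, d]) fun v hv => by simpa using hS v hv).length_le
  have semipole_mem (k : Fin 2) : semipole k ∈ ({a, b, c, d} : Set _) := by
    by_contra hk
    refine absurd (length_le [pole 0, pole 1, spoke ⟨0, by omega⟩, spoke ⟨1, by omega⟩,
      spoke ⟨2, by omega⟩] (by simp) fun v hv => ?_) (by simp)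
    rw [← h _ hk]
    simp only [List.mem_cons, List.not_mem_nil, or_false] at hv
    rcases hv with rfl | rfl | rfl | rfl | rfl <;> simp [adj_iff, WKind.pattern]
  have isolated_mem (i : Fin p) : isolated i ∈ ({a, b, c, d} : Set _) := by
    by_contra hi
    have := h _ hi ▸ semipole_mem 0
    simp [adj_iff, WKind.pattern] at this
  refine absurd (length_le [semipole 0, semipole 1, isolated ⟨0, by omega⟩,
    isolated ⟨1, by omega⟩, isolated ⟨2, by omega⟩] (by simp) fun v hv => ?_) (by simp)
  simp only [List.mem_cons, List.not_mem_nil, or_false] at hv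
  rcases hv with rfl | rfl | rfl | rfl | rfl <;> simp [semipole_mem, isolated_mem]

theorem card_isolated : Fintype.card {v : Vert p q // kind v = .isolated} = p := by
  have hf : Function.Bijective fun c : Fin p =>
      (⟨isolated c, rfl⟩ : {v : Vert p q // kind v = .isolated}) := by
    refine ⟨fun c c' h => by simpa using congrArg Subtype.val h, ?_⟩
    rintro ⟨_ | c | _ | _, hv⟩ <;> simp [kind] at hv
    exact ⟨c, rfl⟩
  simpa using (Fintype.card_of_bijective hf).symm

theorem card_spoke : Fintype.card {v : Vert p q // kind v = .spoke} = q := by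
  have hf : Function.Bijective fun t : Fin q =>
      (⟨spoke t, rfl⟩ : {v : Vert p q // kind v = .spoke}) := by
    refine ⟨fun t t' h => by simpa using congrArg Subtype.val h, ?_⟩
    rintro ⟨_ | _ | _ | t, hv⟩ <;> simp [kind] at hv
    exact ⟨t, rfl⟩
  simpa using (Fintype.card_of_bijective hf).symm

end Wgraph

namespace IsContractionModel

open Wgraph

variable {p q p' q' : ℕ}

theorem pattern_adj_kind_owner {V : Type*} {G : SimpleGraph V}
    {φ : Vert p q → Set V} (hφ : IsContractionModel G (Wgraph p q) φ)
    {v a b : V} (ha : G.Adj v a) (hb : G.Adj v b) (hab : hφ.owner a ≠ hφ.owner b) {X : WKind}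
    (hXa : kind (hφ.owner a) = X) (hXb : kind (hφ.owner b) = X) :
    WKind.pattern.Adj (kind (hφ.owner v)) X := by
  rcases hφ.adj_owner_or_adj_owner ha hb hab with h | h
  · exact hXa ▸ adj_iff.1 h
  · exact hXb ▸ adj_iff.1 h

variable {φ : Vert p q → Set (Vert p' q')}
  (hφ : IsContractionModel (Wgraph p' q') (Wgraph p q) φ)

theorem owner_poles (hp : 3 ≤ p) (hq : 3 ≤ q) :
    (∀ i, kind (hφ.owner (pole i)) = .pole) ∧ hφ.owner (pole 0) ≠ hφ.owner (pole 1) := by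
  by_cases h : ∃ c : Fin p', hφ.owner (isolated c) ≠ hφ.owner (pole 0) ∧
      hφ.owner (isolated c) ≠ hφ.owner (pole 1)
  · obtain ⟨c, h0, h1⟩ := h
    have hN : (Wgraph p q).neighborSet (hφ.owner (isolated c)) =
        {hφ.owner (pole 0), hφ.owner (pole 1)} := by
      rw [hφ.neighborSet_owner, neighborSet_isolated, Set.image_pair]
      intro b hb
      rw [← mem_neighborSet, neighborSet_isolated] at hb
      rcases hb with rfl | rfl
      exacts [h0.symm, h1.symm]
    obtain ⟨-, h0, h1, hne⟩ := kind_eq_of_neighborSet_eq_pair (by omega) hN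
    exact ⟨fun i => by fin_cases i <;> assumption, hne⟩
  · -- Otherwise each branch set other than those of the poles and semipoles of `W_{p',q'}` is a
    -- single spoke, adjacent to exactly those four branch sets; `W_{p,q}` has no room for that.
    push Not at h
    exfalso
    obtain ⟨w, hwS, hwN⟩ := exists_neighborSet_ne hp hq
      (hφ.owner (pole 0)) (hφ.owner (pole 1)) (hφ.owner (semipole 0)) (hφ.owner (semipole 1))
    obtain ⟨a, rfl⟩ := hφ.owner_surjective w
    have hNa : (Wgraph p' q').neighborSet a = {pole 0, pole 1, semipole 0, semipole 1} := by
      rcases a with i | c | k | t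
      · fin_cases i <;> simp at hwS
      · by_cases h0 : hφ.owner (isolated c) = hφ.owner (pole 0)
        · simp [h0] at hwS
        · simp [h c h0] at hwS
      · fin_cases k <;> simp at hwS
      · exact neighborSet_spoke t
    refine hwN ?_
    rw [hφ.neighborSet_owner, hNa]
    · simp [Set.image_insert_eq]
    · intro b hb hba
      rw [← mem_neighborSet, hNa] at hb
      refine hwS (hba ▸ ?_)
      rcases hb with rfl | rfl | rfl | rfl <;> simp

theorem kind_owner_eq_pole_iff (hp : 3 ≤ p) (hq : 3 ≤ q) {v : Vert p' q'} :
    kind (hφ.owner v) = .pole ↔ kind v = .pole := by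
  obtain ⟨hpole, hne⟩ := hφ.owner_poles hp hq
  refine ⟨fun hv => ?_, fun hv => ?_⟩
  · by_contra hv'
    have adj_pole (i : Fin 2) : (Wgraph p' q').Adj v (pole i) := by
      simpa [adj_iff, WKind.pattern] using hv'
    exact (hφ.pattern_adj_kind_owner (adj_pole 0) (adj_pole 1) hne (hpole 0) (hpole 1)).ne hv
  · rcases v with i | _ | _ | _ <;> simp [kind] at hv
    exact hpole i

theorem kind_owner_of_kind_eq_isolated (hp : 3 ≤ p) (hq : 3 ≤ q)
    {v : Vert p' q'} (hv : kind v = .isolated) :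
    kind (hφ.owner v) = .isolated := by
  obtain ⟨hpole, -⟩ := hφ.owner_poles hp hq
  rcases v with _ | c | _ | _ <;> simp [kind] at hv
  have hN : (Wgraph p q).neighborSet (hφ.owner (isolated c)) =
      {hφ.owner (pole 0), hφ.owner (pole 1)} := by
    rw [hφ.neighborSet_owner, neighborSet_isolated, Set.image_pair]
    intro b hb hbc
    rw [← mem_neighborSet, neighborSet_isolated] at hb
    have : kind (hφ.owner b) = .pole := by rcases hb with rfl | rfl <;> exact hpole _
    simp [hbc, hφ.kind_owner_eq_pole_iff hp hq] at this
  exact (kind_eq_of_neighborSet_eq_pair (by omega) hN).1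

theorem exists_owner_semipole_eq (hp : 3 ≤ p) (hq : 3 ≤ q) (k : Fin 2) :
    ∃ j, hφ.owner (semipole j) = semipole k := by
  obtain ⟨hpole, -⟩ := hφ.owner_poles hp hq
  obtain ⟨t, ht0, ht1⟩ := exists_spoke_ne hq (hφ.owner (semipole 0)) (hφ.owner (semipole 1))
  obtain ⟨a, ha⟩ := hφ.owner_surjective (spoke t)
  have hNa : (Wgraph p' q').neighborSet a = {pole 0, pole 1, semipole 0, semipole 1} := by
    have hka : kind (hφ.owner a) = .spoke := by rw [ha, kind_spoke]
    rcases a with i | c | j | s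
    · simp [hpole i] at hka
    · simp [hφ.kind_owner_of_kind_eq_isolated hp hq (kind_isolated c)] at hka
    · fin_cases j
      exacts [absurd ha.symm ht0, absurd ha.symm ht1]
    · exact neighborSet_spoke s
  have hN : (Wgraph p q).neighborSet (spoke t) = {hφ.owner (pole 0), hφ.owner (pole 1),
      hφ.owner (semipole 0), hφ.owner (semipole 1)} := by
    rw [← ha, hφ.neighborSet_owner, hNa]
    · simp [Set.image_insert_eq]
    · intro b hb hba
      rw [← mem_neighborSet, hNa] at hb
      rw [ha] at hba
      rcases hb with rfl | rfl | rfl | rfl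
      · simpa [hba] using hpole 0
      · simpa [hba] using hpole 1
      · exact ht0 hba.symm
      · exact ht1 hba.symm
  have hk : semipole k ∈ (Wgraph p q).neighborSet (spoke t) := by
    simp [adj_iff, WKind.pattern]
  rw [hN] at hk
  rcases hk with h | h | h | h
  · simpa [← h] using hpole 0
  · simpa [← h] using hpole 1
  · exact ⟨0, h.symm⟩
  · exact ⟨1, h.symm⟩

theorem kind_owner (hp : 3 ≤ p) (hq : 3 ≤ q) (v : Vert p' q') :
    kind (hφ.owner v) = kind v := by
  obtain ⟨a, ha⟩ := hφ.exists_owner_semipole_eq hp hq 0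
  obtain ⟨b, hb⟩ := hφ.exists_owner_semipole_eq hp hq 1
  have hab : a ≠ b := by
    rintro rfl
    simp [ha] at hb
  rcases v with i | c | k | t
  · exact (hφ.kind_owner_eq_pole_iff hp hq).2 rfl
  · exact hφ.kind_owner_of_kind_eq_isolated hp hq rfl
  · obtain rfl | rfl : k = a ∨ k = b := by omega
    · rw [ha, kind_semipole, kind_semipole]
    · rw [hb, kind_semipole, kind_semipole]
  · have hadj (j : Fin 2) : (Wgraph p' q').Adj (spoke t) (semipole j) := by
      simp [adj_iff, WKind.pattern]
    have h := hφ.pattern_adj_kind_owner (hadj a) (hadj b) (by simp [ha, hb])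
      (by rw [ha, kind_semipole]) (by rw [hb, kind_semipole])
    have hnp := mt (hφ.kind_owner_eq_pole_iff hp hq (v := spoke t)).1 (by simp)
    revert h hnp
    cases kind (hφ.owner (spoke t)) <;> simp [WKind.pattern]

end IsContractionModel

theorem Wgraph.eq_of_isContraction {p q p' q' : ℕ} (hp : 3 ≤ p) (hq : 3 ≤ q)
    (h : IsContraction (Wgraph p q) (Wgraph p' q')) : p = p' ∧ q = q' := by
  obtain ⟨φ, hφ⟩ := h
  have hbij : Function.Bijective hφ.owner := by
    refine ⟨hφ.owner_injective fun a b hab h => (adj_iff.1 hab).ne ?_, hφ.owner_surjective⟩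
    rw [← hφ.kind_owner hp hq a, h, hφ.kind_owner hp hq b]
  have hcard (X : WKind) : Fintype.card {v // kind v = X} = Fintype.card {w // kind w = X} :=
    Fintype.card_congr <| (Equiv.ofBijective _ hbij).subtypeEquiv
      fun v => by rw [Equiv.ofBijective_apply, hφ.kind_owner hp hq]
  exact ⟨by simpa [card_isolated] using (hcard .isolated).symm,
    by simpa [card_spoke] using (hcard .spoke).symm⟩

/-- For all integers `p, q, p', q' ≥ 3`, there is a contraction model
of `W_{p,q}` in `W_{p',q'}` if and only if `p = p'` and `q = q'`. In particular, the
graphs `W_{p,q}` for `p, q ≥ 3` form an infinite antichain of the contraction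
relation. -/
theorem Wgraph_contraction_iff :
    (∀ p q p' q' : ℕ, 3 ≤ p → 3 ≤ q → 3 ≤ p' → 3 ≤ q' →
      (IsContraction (Wgraph p q) (Wgraph p' q') ↔ (p = p' ∧ q = q'))) ∧
    (∀ p q p' q' : ℕ, 3 ≤ p → 3 ≤ q → 3 ≤ p' → 3 ≤ q' → (p, q) ≠ (p', q') →
      ¬ IsContraction (Wgraph p q) (Wgraph p' q')) := by
  refine ⟨fun p q p' q' hp hq _ _ => ⟨Wgraph.eq_of_isContraction hp hq, ?_⟩,
    fun p q p' q' hp hq _ _ hne h => hne ?_⟩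
  · rintro ⟨rfl, rfl⟩
    exact .refl _
  · obtain ⟨rfl, rfl⟩ := Wgraph.eq_of_isContraction hp hq h
    rfl
end
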